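/- arXiv:math/9908016 — 2 statements merged into one kernel-verified Lean document; each statement's English description precedes it below -/
import Mathlib

section
/- The bijection J preserves the rank function: for every α^{(a)} in C_{p,m}, writing a = pl + r with 0 ≤ r < p, one has a(m+p) + Σ_{j=1}^{p}(α_j - j) = Σ_{i=1}^{p}(J(α^{(a)})_i - i). -/
def QRow (p m : ℕ) : Type :=
  {α : Fin p → ℕ // StrictMono α ∧ ∀ i, 1 ≤ α i ∧ α i ≤ m + p}

def QElt (p m : ℕ) : Type := QRow p m × ℕ

def Jmap {p m : ℕ} (x : QElt p m) : Fin p → ℕ := fun i =>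
  if h : (i : ℕ) < p - x.2 % p then
    (x.2 / p) * (m + p) + x.1.1 ⟨x.2 % p + i, by
      have h1 := i.isLt; have h2 := Nat.mod_lt x.2 i.pos; omega⟩
  else
    (x.2 / p + 1) * (m + p) + x.1.1 ⟨(i : ℕ) - (p - x.2 % p), by
      have h1 := i.isLt; omega⟩

/-!
The `i`-th entry (0-based) of `J(α^{(a)})` is
`⌊(a + i)/p⌋ (m + p) + α_{(a + i) mod p}`. Summing over `i`, the second terms are a cyclic
rotation of `α` and the first add up to `a (m + p)` by Hermite's identity
`∑_{i < p} ⌊(a + i)/p⌋ = a`.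
-/

open Finset

theorem Nat.sum_range_add_div {p : ℕ} (hp : 0 < p) (a : ℕ) :
    ∑ i ∈ range p, (a + i) / p = a := by
  induction a with
  | zero => exact sum_eq_zero fun i hi => Nat.div_eq_of_lt (by simpa using hi)
  | succ a ih =>
    have h := (sum_range_succ' (fun i => (a + i) / p) p).symm.trans
      (sum_range_succ (fun i => (a + i) / p) p)
    simp only [add_zero, Nat.add_div_right a hp, ih] at h
    simp only [show ∀ i, a + 1 + i = a + (i + 1) by intro i; ring]
    omega

theorem Jmap_apply {p m : ℕ} [NeZero p] (x : QElt p m) (i : Fin p) :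
    Jmap x i = (x.2 + i) / p * (m + p) + x.1.1 (Fin.ofNat p x.2 + i) := by
  have hi := i.isLt
  have hr := Nat.mod_lt x.2 (NeZero.pos p)
  have hdiv := Nat.add_div (a := x.2) (b := i) (NeZero.pos p)
  rw [Nat.div_eq_of_lt hi, Nat.mod_eq_of_lt hi] at hdiv
  unfold Jmap
  split_ifs with h
  · have hj : Fin.ofNat p x.2 + i = ⟨x.2 % p + i, by omega⟩ := by
      ext
      rw [Fin.val_add, Fin.val_ofNat, Nat.mod_eq_of_lt (by omega)]
    rw [hdiv, if_neg (by omega), hj, add_zero, add_zero]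
  · have hj : Fin.ofNat p x.2 + i = ⟨i - (p - x.2 % p), by omega⟩ := by
      ext
      rw [Fin.val_add, Fin.val_ofNat, Nat.mod_eq_sub_mod (by omega), Nat.mod_eq_of_lt (by omega)]
      dsimp only
      omega
    rw [hdiv, if_pos (by omega), hj, add_zero]

theorem Jmap_sum {p m : ℕ} [NeZero p] (x : QElt p m) :
    ∑ i, Jmap x i = x.2 * (m + p) + ∑ i, x.1.1 i := by
  simp only [Jmap_apply, sum_add_distrib, ← sum_mul,
    Fin.sum_univ_eq_sum_range (fun i => (x.2 + i) / p), Nat.sum_range_add_div (NeZero.pos p)]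
  exact congrArg _ (Equiv.sum_comp (Equiv.addLeft (Fin.ofNat p x.2)) x.1.1)

theorem Jmap_rank_general (p m : ℕ) (hp : 0 < p) (x : QElt p m) :
    (x.2 : ℤ) * (m + p) + ∑ i : Fin p, ((x.1.1 i : ℤ) - ((i : ℕ) + 1)) =
      ∑ i : Fin p, ((Jmap x i : ℤ) - ((i : ℕ) + 1)) := by
  have : NeZero p := ⟨hp.ne'⟩
  have hsum : (∑ i, Jmap x i : ℤ) = x.2 * (m + p) + ∑ i, (x.1.1 i : ℤ) := by
    exact_mod_cast Jmap_sum x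
  rw [sum_sub_distrib, sum_sub_distrib, hsum]
  ring

/-- `J` preserves the rank function:
`a(m+p) + Σ_j (α_j − j) = Σ_i (J(α^{(a)})_i − i)` (indices 1-based, so the `i`-th
term subtracts `i+1` for the 0-based index `i`). -/
theorem Jmap_rank (p m : ℕ) (hp : 0 < p) (hm : 0 < m) (x : QElt p m) :
    (x.2 : ℤ) * (m + p) + ∑ i : Fin p, ((x.1.1 i : ℤ) - ((i : ℕ) + 1)) =
      ∑ i : Fin p, ((Jmap x i : ℤ) - ((i : ℕ) + 1)) :=
  Jmap_rank_general p m hp x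
end

section
/- For incomparable α^{(a)}, β^{(b)} in C^q_{p,m}, the binomial α^{(a)}·β^{(b)} − (α^{(a)}∨β^{(b)})·(α^{(a)}∧β^{(b)}) lies in the kernel of the monomial map ψ : k[C^q_{p,m}] → k[X] sending each variable γ^{(c)} to the initial monomial in_≺(φ(γ^{(c)})). -/
open MvPolynomial

def qle {p m : ℕ} (x y : QElt p m) : Prop :=
  x.2 ≤ y.2 ∧ ∀ i j : Fin p, (j : ℕ) = (i : ℕ) + (y.2 - x.2) → x.1.1 i ≤ y.1.1 j

/-- Exponent vector of the initial monomial `in_≺(φ(α^{(a)})) =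
x_{r+1,α_p}^{(l)} ⋯ x_{p,α_{r+1}}^{(l)} x_{1,α_r}^{(l+1)} ⋯ x_{r,α_1}^{(l+1)}`,
where `a = pl + r`, `0 ≤ r < p`; variables are triples `(row, column, level)`. -/
noncomputable def leadExp {p : ℕ} (α : Fin p → ℕ) (a : ℕ) : (ℕ × ℕ × ℕ) →₀ ℕ :=
  ∑ t : Fin p,
    if (t : ℕ) < p - a % p then
      Finsupp.single ((a % p + t : ℕ), α ⟨p - 1 - t, by have := t.isLt; omega⟩, a / p) 1
    else
      Finsupp.single (((t : ℕ) - (p - a % p)),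
        α ⟨a % p - 1 - ((t : ℕ) - (p - a % p)),
          by have := t.isLt; have := Nat.mod_lt a t.pos; omega⟩, a / p + 1) 1

/-- The monomial map `ψ` on a single variable: `α^{(a)} ↦ in_≺(φ(α^{(a)}))`. -/
noncomputable def psiMono (k : Type) [Field k] {p m : ℕ} (z : QElt p m) :
    MvPolynomial (ℕ × ℕ × ℕ) k :=
  monomial (leadExp z.1.1 z.2) 1

/-!
Entry `α_i` of `α^{(a)}` (indices from `0`) sits at position `a + (p - 1 - i)`, and a position
`N` carries the variable `x_{N mod p, α_i}^{(N div p)}` of `in_≺(φ(α^{(a)}))`. So every row holds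
exactly one variable of each monomial `ψ(α^{(a)})`, and for `a ≤ b` the entries `α_i` and
`β_{i + (b - a)}` share a position. These are exactly the entries compared by the order, so the
meet has level `a`, takes the minimum on shared positions and keeps `α` elsewhere, while the join
has level `b`, takes the maximum on shared positions and keeps `β` elsewhere. Row by row, the
variables of `ψ(x∨y) ψ(x∧y)` are then those of `ψ(x) ψ(y)`.
-/

lemma leadExp_eq_sum_shift {p : ℕ} (α : Fin p → ℕ) (a : ℕ) :
    leadExp α a = ∑ t : Fin p, Finsupp.single ((a + t) % p, α t.rev, (a + t) / p) 1 := by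
  refine Finset.sum_congr rfl fun t _ => ?_
  have hdm := Nat.div_add_mod a p
  have hr := Nat.mod_lt a t.pos
  split_ifs with h
  · obtain ⟨hdiv, hmod⟩ := (Nat.div_mod_unique t.pos).2 (⟨by omega, by omega⟩ :
      a % p + t + p * (a / p) = a + t ∧ a % p + t < p)
    rw [hdiv, hmod]
    exact congrArg (Finsupp.single · 1)
      (Prod.ext rfl (Prod.ext (congrArg α (Fin.ext (by simp only [Fin.val_rev]; omega))) rfl))
  · obtain ⟨hdiv, hmod⟩ := (Nat.div_mod_unique t.pos).2 (⟨by rw [Nat.mul_add]; omega, by omega⟩ :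
      t - (p - a % p) + p * (a / p + 1) = a + t ∧ t - (p - a % p) < p)
    rw [hdiv, hmod]
    exact congrArg (Finsupp.single · 1)
      (Prod.ext rfl (Prod.ext (congrArg α (Fin.ext (by simp only [Fin.val_rev]; omega))) rfl))

/-- The variable of `in_≺(φ(α^{(a)}))` in row `s`: its entry `α_i` is the one whose position
`a + (p - 1 - i)` is `≡ s (mod p)`. -/
def rowVar {p : ℕ} (α : Fin p → ℕ) (a : ℕ) (s : Fin p) : ℕ × ℕ × ℕ :=
  (s, α ⟨(a + s.rev) % p, Nat.mod_lt _ s.pos⟩, (a + s.rev) / p)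

lemma rowVar_eq_of_pos {p : ℕ} {α : Fin p → ℕ} {a L : ℕ} {s i : Fin p}
    (h : a + s.rev = p * L + i) : rowVar α a s = ((s : ℕ), α i, L) := by
  obtain ⟨hdiv, hmod⟩ := (Nat.div_mod_unique s.pos).2 (⟨by rw [h, add_comm], i.isLt⟩ :
    (i : ℕ) + p * L = a + s.rev ∧ (i : ℕ) < p)
  simp only [rowVar, hdiv, hmod]

lemma leadExp_eq_sum_rowVar {p : ℕ} (α : Fin p → ℕ) (a : ℕ) :
    leadExp α a = ∑ s : Fin p, Finsupp.single (rowVar α a s) 1 := by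
  rw [leadExp_eq_sum_shift]
  have hinj : Function.Injective fun t : Fin p => (⟨(a + t) % p, Nat.mod_lt _ t.pos⟩ : Fin p) :=
    fun t₁ t₂ h => Fin.ext <|
      (Nat.ModEq.add_left_cancel' a (congrArg Fin.val h)).eq_of_lt_of_lt t₁.isLt t₂.isLt
  refine Fintype.sum_bijective _ (Finite.injective_iff_bijective.mp hinj) _ _ fun t => ?_
  have hdm := Nat.div_add_mod (a + t) p
  have hlt := Nat.mod_lt (a + t) t.pos
  have hpos : a + (⟨(a + t) % p, hlt⟩ : Fin p).rev = p * ((a + t) / p) + t.rev := by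
    simp only [Fin.val_rev]
    generalize p * ((a + t) / p) = P at hdm ⊢
    omega
  rw [rowVar_eq_of_pos hpos]

namespace QElt

variable {p m : ℕ}

lemma qle_antisymm {x y : QElt p m} (hxy : qle x y) (hyx : qle y x) : x = y := by
  have hlevel : x.2 = y.2 := le_antisymm hxy.1 hyx.1
  refine Prod.ext (Subtype.ext (funext fun i => le_antisymm ?_ ?_)) hlevel
  · exact hxy.2 i i (by omega)
  · exact hyx.2 i i (by omega)

def meetRow (x y : QElt p m) (i : Fin p) : ℕ :=
  if h : (i : ℕ) + (y.2 - x.2) < p then min (x.1.1 i) (y.1.1 ⟨i + (y.2 - x.2), h⟩)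
  else x.1.1 i

def joinRow (x y : QElt p m) (j : Fin p) : ℕ :=
  if h : y.2 - x.2 ≤ (j : ℕ) then max (y.1.1 j) (x.1.1 ⟨j - (y.2 - x.2), by omega⟩)
  else y.1.1 j

lemma meetRow_strictMono (x y : QElt p m) : StrictMono (meetRow x y) := by
  intro i j hij
  have hx : x.1.1 i < x.1.1 j := x.1.2.1 hij
  unfold meetRow
  split_ifs with hi hj hj
  · have : y.1.1 ⟨i + (y.2 - x.2), hi⟩ < y.1.1 ⟨j + (y.2 - x.2), hj⟩ :=
      y.1.2.1 (Fin.mk_lt_mk.2 (by simpa using hij))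
    omega
  all_goals omega

lemma joinRow_strictMono (x y : QElt p m) : StrictMono (joinRow x y) := by
  intro i j hij
  have hy : y.1.1 i < y.1.1 j := y.1.2.1 hij
  unfold joinRow
  split_ifs with hi hj hj
  · have : x.1.1 ⟨i - (y.2 - x.2), by omega⟩ < x.1.1 ⟨j - (y.2 - x.2), by omega⟩ :=
      x.1.2.1 (Fin.mk_lt_mk.2 (by simp only [Fin.lt_def] at hij; omega))
    omega
  all_goals omega

lemma meetRow_bounds (x y : QElt p m) (i : Fin p) :
    1 ≤ meetRow x y i ∧ meetRow x y i ≤ m + p := by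
  have hx := x.1.2.2 i
  unfold meetRow
  split_ifs with h
  · have := y.1.2.2 ⟨i + (y.2 - x.2), h⟩
    omega
  · exact hx

lemma joinRow_bounds (x y : QElt p m) (j : Fin p) :
    1 ≤ joinRow x y j ∧ joinRow x y j ≤ m + p := by
  have hy := y.1.2.2 j
  unfold joinRow
  split_ifs with h
  · have := x.1.2.2 ⟨j - (y.2 - x.2), by omega⟩
    omega
  · exact hy

def meet (x y : QElt p m) : QElt p m :=
  (⟨meetRow x y, meetRow_strictMono x y, meetRow_bounds x y⟩, x.2)

def join (x y : QElt p m) : QElt p m :=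
  (⟨joinRow x y, joinRow_strictMono x y, joinRow_bounds x y⟩, y.2)

variable {x y z : QElt p m}

@[simp] lemma meet_snd : (meet x y).2 = x.2 := rfl

@[simp] lemma join_snd : (join x y).2 = y.2 := rfl

lemma meetRow_of_lt {i : Fin p} (h : (i : ℕ) + (y.2 - x.2) < p) :
    meetRow x y i = min (x.1.1 i) (y.1.1 ⟨i + (y.2 - x.2), h⟩) := dif_pos h

lemma meetRow_of_le {i : Fin p} (h : p ≤ (i : ℕ) + (y.2 - x.2)) : meetRow x y i = x.1.1 i :=
  dif_neg h.not_gt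

lemma joinRow_of_le {j : Fin p} (h : y.2 - x.2 ≤ (j : ℕ)) :
    joinRow x y j = max (y.1.1 j) (x.1.1 ⟨j - (y.2 - x.2), by omega⟩) := dif_pos h

lemma joinRow_of_lt {j : Fin p} (h : (j : ℕ) < y.2 - x.2) : joinRow x y j = y.1.1 j :=
  dif_neg h.not_ge

lemma meet_le_left : qle (meet x y) x := by
  refine ⟨le_rfl, fun i j hj => ?_⟩
  obtain rfl : j = i := Fin.ext (by simpa using hj)
  show meetRow x y j ≤ x.1.1 j
  unfold meetRow
  split_ifs
  exacts [min_le_left _ _, le_rfl]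

lemma meet_le_right (h : x.2 ≤ y.2) : qle (meet x y) y := by
  refine ⟨h, fun i j hj => ?_⟩
  show meetRow x y i ≤ y.1.1 j
  rw [meet_snd] at hj
  have hlt : (i : ℕ) + (y.2 - x.2) < p := hj ▸ j.isLt
  rw [meetRow_of_lt hlt, show j = ⟨_, hlt⟩ from Fin.ext hj]
  exact min_le_right _ _

lemma le_meet (h : x.2 ≤ y.2) (hzx : qle z x) (hzy : qle z y) : qle z (meet x y) := by
  refine ⟨hzx.1, fun i j hj => ?_⟩
  show z.1.1 i ≤ meetRow x y j
  have hzx' := hzx.2 i j hj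
  by_cases hjp : (j : ℕ) + (y.2 - x.2) < p
  · rw [meetRow_of_lt hjp]
    have := hzx.1
    exact le_min hzx' (hzy.2 _ _ (by rw [meet_snd] at hj; simp only; omega))
  · rwa [meetRow_of_le (not_lt.1 hjp)]

lemma left_le_join (h : x.2 ≤ y.2) : qle x (join x y) := by
  refine ⟨h, fun i j hj => ?_⟩
  show x.1.1 i ≤ joinRow x y j
  rw [join_snd] at hj
  rw [joinRow_of_le (by omega),
    show (⟨j - (y.2 - x.2), _⟩ : Fin p) = i from Fin.ext (by simp only; omega)]
  exact le_max_right _ _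

lemma right_le_join : qle y (join x y) := by
  refine ⟨le_rfl, fun i j hj => ?_⟩
  obtain rfl : j = i := Fin.ext (by simpa using hj)
  show y.1.1 j ≤ joinRow x y j
  unfold joinRow
  split_ifs
  exacts [le_max_left _ _, le_rfl]

lemma join_le (h : x.2 ≤ y.2) (hxz : qle x z) (hyz : qle y z) : qle (join x y) z := by
  refine ⟨hyz.1, fun i j hj => ?_⟩
  show joinRow x y i ≤ z.1.1 j
  have hyz' := hyz.2 i j hj
  by_cases hid : y.2 - x.2 ≤ (i : ℕ)
  · rw [joinRow_of_le hid]
    have := hyz.1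
    exact max_le hyz' (hxz.2 _ _ (by rw [join_snd] at hj; simp only; omega))
  · rwa [joinRow_of_lt (not_le.1 hid)]

lemma eq_meet_of_glb (h : x.2 ≤ y.2) {u : QElt p m} (hux : qle u x) (huy : qle u y)
    (hmax : ∀ z : QElt p m, qle z x → qle z y → qle z u) : u = meet x y :=
  qle_antisymm (le_meet h hux huy) (hmax _ meet_le_left (meet_le_right h))

lemma eq_join_of_lub (h : x.2 ≤ y.2) {v : QElt p m} (hxv : qle x v) (hyv : qle y v)
    (hmin : ∀ z : QElt p m, qle x z → qle y z → qle v z) : v = join x y :=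
  qle_antisymm (hmin _ (left_le_join h) right_le_join) (join_le h hxv hyv)

lemma single_rowVar_add_single_rowVar (h : x.2 ≤ y.2) (s : Fin p) :
    Finsupp.single (rowVar x.1.1 x.2 s) 1 + Finsupp.single (rowVar y.1.1 y.2 s) 1 =
      Finsupp.single (rowVar (join x y).1.1 y.2 s) 1 +
        Finsupp.single (rowVar (meet x y).1.1 x.2 s) 1 := by
  set d := y.2 - x.2 with hd
  set i : Fin p := ⟨(x.2 + s.rev) % p, Nat.mod_lt _ s.pos⟩
  set L := (x.2 + s.rev) / p
  have hx : x.2 + s.rev = p * L + i := (Nat.div_add_mod _ _).symm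
  by_cases hshared : (i : ℕ) + d < p
  · have hy : y.2 + s.rev = p * L + (⟨i + d, hshared⟩ : Fin p) := by simp only; omega
    have hjoin : joinRow x y ⟨i + d, hshared⟩ = max (y.1.1 ⟨i + d, hshared⟩) (x.1.1 i) := by
      rw [joinRow_of_le (by simp only; omega)]
      simp only [hd, Nat.add_sub_cancel, Fin.eta]
    rw [rowVar_eq_of_pos hx, rowVar_eq_of_pos hx, rowVar_eq_of_pos hy, rowVar_eq_of_pos hy]
    change _ = Finsupp.single ((s : ℕ), joinRow x y _, L) 1 +
      Finsupp.single ((s : ℕ), meetRow x y i, L) 1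
    rw [hjoin, meetRow_of_lt hshared]
    rcases le_total (x.1.1 i) (y.1.1 ⟨i + d, hshared⟩) with hle | hle
    · rw [max_eq_left hle, min_eq_left hle, add_comm]
    · rw [max_eq_right hle, min_eq_right hle]
  · set j : Fin p := ⟨(y.2 + s.rev) % p, Nat.mod_lt _ s.pos⟩
    have hy : y.2 + s.rev = p * ((y.2 + s.rev) / p) + j := (Nat.div_add_mod _ _).symm
    have hwrap : y.2 + s.rev = (i + d - p) + p * (L + 1) := by rw [mul_add_one]; omega
    have hj : (j : ℕ) < d :=
      calc (y.2 + s.rev) % p = (i + d - p) % p := by rw [hwrap, Nat.add_mul_mod_self_left]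
        _ ≤ i + d - p := Nat.mod_le _ _
        _ < d := by omega
    have hmeet : (meet x y).1.1 i = x.1.1 i := meetRow_of_le (not_lt.1 hshared)
    have hjoin : (join x y).1.1 j = y.1.1 j := joinRow_of_lt hj
    rw [rowVar_eq_of_pos hx, rowVar_eq_of_pos hx, rowVar_eq_of_pos hy, rowVar_eq_of_pos hy,
      hmeet, hjoin, add_comm]

lemma psiMono_mul_psiMono (k : Type) [Field k] (h : x.2 ≤ y.2) :
    psiMono k x * psiMono k y = psiMono k (join x y) * psiMono k (meet x y) := by
  simp only [psiMono, monomial_mul, mul_one, join_snd, meet_snd, leadExp_eq_sum_rowVar,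
    ← Finset.sum_add_distrib]
  exact congrArg (monomial · 1)
    (Finset.sum_congr rfl fun s _ => single_rowVar_add_single_rowVar h s)

end QElt

theorem hibi_binomial_in_kernel_general (k : Type) [Field k] (p m : ℕ)
    (x y u v : QElt p m)
    (hglb : qle u x ∧ qle u y ∧ ∀ z : QElt p m, qle z x → qle z y → qle z u)
    (hlub : qle x v ∧ qle y v ∧ ∀ z : QElt p m, qle x z → qle y z → qle v z) :
    psiMono k x * psiMono k y = psiMono k v * psiMono k u := by
  obtain ⟨hux, huy, hmax⟩ := hglb
  obtain ⟨hxv, hyv, hmin⟩ := hlub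
  rcases le_total x.2 y.2 with h | h
  · rw [QElt.eq_meet_of_glb h hux huy hmax, QElt.eq_join_of_lub h hxv hyv hmin]
    exact QElt.psiMono_mul_psiMono k h
  · rw [mul_comm, QElt.eq_meet_of_glb h huy hux fun z hzy hzx => hmax z hzx hzy,
      QElt.eq_join_of_lub h hyv hxv fun z hyz hxz => hmin z hxz hyz]
    exact QElt.psiMono_mul_psiMono k h

/-- for incomparable `α^{(a)}, β^{(b)}` in `C^q_{p,m}`, the binomial
`α^{(a)}·β^{(b)} − (α^{(a)}∨β^{(b)})·(α^{(a)}∧β^{(b)})` lies in the kernel of the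
monomial map `ψ`; i.e. `ψ(x)ψ(y) = ψ(x∨y)ψ(x∧y)` whenever `u` is the meet and `v`
the join of the incomparable pair `x, y`. -/
theorem hibi_binomial_in_kernel (k : Type) [Field k] (p m n q : ℕ)
    (hp : 0 < p) (hm : 0 < m) (hq : q ≤ n * p)
    (x y u v : QElt p m)
    (hx : x.2 ≤ q) (hy : y.2 ≤ q) (hu : u.2 ≤ q) (hv : v.2 ≤ q)
    (hinc : ¬ qle x y ∧ ¬ qle y x)
    (hglb : qle u x ∧ qle u y ∧ ∀ z : QElt p m, qle z x → qle z y → qle z u)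
    (hlub : qle x v ∧ qle y v ∧ ∀ z : QElt p m, qle x z → qle y z → qle v z) :
    psiMono k x * psiMono k y = psiMono k v * psiMono k u :=
  hibi_binomial_in_kernel_general k p m x y u v hglb hlub
end
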